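/- Let X be a nonempty compact metric space, μ a finite Borel measure on X with μ(X) > 0, and f, g : X → ℝ continuous. Then ∫_X normalize(f+g) dμ ≤ ∫_X normalize(f) dμ + ∫_X normalize(g) dμ, and the following are equivalent: (i) equality holds; (ii) argmin(f) ∩ argmin(g) ≠ ∅; (iii) argmin(f+g) = argmin(f) ∩ argmin(g). -/

import Mathlib

open MeasureTheory Set

/-!
Integrating `normF f = f - minF f` against a finite measure gives `∫ f - μ(X) · minF f`, so the
defect `∫ normF f + ∫ normF g - ∫ normF (f + g)` equals `μ(X) · (minF (f + g) - minF f - minF g)`.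
Since `f + g ≥ minF f + minF g` pointwise, this defect is nonnegative, and it vanishes exactly when
`f + g` attains the value `minF f + minF g`, i.e. when `f` and `g` have a common minimizer; in that
case the minimizers of `f + g` are precisely the common minimizers.
-/

/-- The (attained) minimum of `f` on a nonempty compact space. -/
noncomputable def minF {X : Type*} (f : X → ℝ) : ℝ := sInf (Set.range f)

/-- The (attained) maximum of `f` on a nonempty compact space. -/
noncomputable def maxF {X : Type*} (f : X → ℝ) : ℝ := sSup (Set.range f)

/-- The oscillation `max f - min f`. -/
noncomputable def oscF {X : Type*} (f : X → ℝ) : ℝ := maxF f - minF f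

/-- `normalize f = f - min f`. -/
noncomputable def normF {X : Type*} (f : X → ℝ) : X → ℝ := fun x => f x - minF f

/-- The minimizer set of `f`. -/
def argminF {X : Type*} (f : X → ℝ) : Set X := {x | f x = minF f}

/-- The maximizer set of `f`. -/
def argmaxF {X : Type*} (f : X → ℝ) : Set X := {x | f x = maxF f}

section MinF

variable {X : Type*} [TopologicalSpace X] [CompactSpace X] {f g : X → ℝ}

lemma minF_le (hf : Continuous f) (x : X) : minF f ≤ f x :=
  csInf_le (isCompact_range hf).bddBelow (mem_range_self x)

lemma exists_eq_minF [Nonempty X] (hf : Continuous f) : ∃ x, f x = minF f :=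
  (isCompact_range hf).sInf_mem (range_nonempty f)

lemma minF_add_minF_le [Nonempty X] (hf : Continuous f) (hg : Continuous g) :
    minF f + minF g ≤ minF (f + g) := by
  obtain ⟨x₀, hx₀⟩ := exists_eq_minF (hf.add hg)
  rw [← hx₀]
  exact add_le_add (minF_le hf x₀) (minF_le hg x₀)

lemma mem_argminF_inter_iff (hf : Continuous f) (hg : Continuous g) (x : X) :
    x ∈ argminF f ∩ argminF g ↔ (f + g) x = minF f + minF g := by
  have := minF_le hf x
  have := minF_le hg x
  simp only [Pi.add_apply, argminF, mem_inter_iff, mem_ofPred_eq]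
  constructor
  · rintro ⟨hxf, hxg⟩
    rw [hxf, hxg]
  · intro hx
    constructor <;> linarith

lemma minF_add_eq_iff_nonempty [Nonempty X] (hf : Continuous f) (hg : Continuous g) :
    minF (f + g) = minF f + minF g ↔ (argminF f ∩ argminF g).Nonempty := by
  obtain ⟨x₀, hx₀⟩ := exists_eq_minF (hf.add hg)
  constructor
  · intro he
    exact ⟨x₀, (mem_argminF_inter_iff hf hg x₀).mpr (hx₀.trans he)⟩
  · rintro ⟨x, hx⟩
    have hle := minF_le (hf.add hg) x
    rw [(mem_argminF_inter_iff hf hg x).mp hx] at hle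
    exact le_antisymm hle (minF_add_minF_le hf hg)

lemma minF_add_eq_iff_argminF_add [Nonempty X] (hf : Continuous f) (hg : Continuous g) :
    minF (f + g) = minF f + minF g ↔
      argminF (f + g) = argminF f ∩ argminF g := by
  constructor
  · intro he
    ext x
    rw [mem_argminF_inter_iff hf hg x, ← he]
    rfl
  · intro he
    obtain ⟨x₀, hx₀⟩ := exists_eq_minF (hf.add hg)
    have hx₀_mem : x₀ ∈ argminF (f + g) := hx₀
    rw [he, mem_argminF_inter_iff hf hg x₀] at hx₀_mem
    exact hx₀.symm.trans hx₀_mem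

end MinF

section Integral

variable {X : Type*} [MeasurableSpace X] (μ : Measure X) [IsFiniteMeasure μ] {f g : X → ℝ}

lemma integral_normF (hf : Integrable f μ) :
    ∫ x, normF f x ∂μ = ∫ x, f x ∂μ - μ.real univ * minF f := by
  unfold normF
  rw [integral_sub hf (integrable_const _), integral_const, smul_eq_mul]

lemma integral_normF_add_defect (hf : Integrable f μ) (hg : Integrable g μ) :
    ∫ x, normF f x ∂μ + ∫ x, normF g x ∂μ - ∫ x, normF (f + g) x ∂μ =
      μ.real univ * (minF (f + g) - (minF f + minF g)) := by
  rw [integral_normF μ hf, integral_normF μ hg, integral_normF μ (hf.add hg),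
    integral_add' hf hg]
  ring

end Integral

lemma Continuous.integrable_of_compactSpace {X : Type*} [TopologicalSpace X] [CompactSpace X]
    [MeasurableSpace X] [OpensMeasurableSpace X] {μ : Measure X} [IsFiniteMeasure μ]
    {f : X → ℝ} (hf : Continuous f) : Integrable f μ :=
  hf.integrable_of_hasCompactSupport (HasCompactSupport.of_compactSpace f)

theorem stmt_2 {X : Type*} [MetricSpace X] [CompactSpace X] [Nonempty X]
    [MeasurableSpace X] [BorelSpace X]
    (μ : Measure X) [IsFiniteMeasure μ] (hμ : 0 < μ Set.univ)
    (f g : X → ℝ) (hf : Continuous f) (hg : Continuous g) :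
    (∫ x, normF (fun x => f x + g x) x ∂μ) ≤
      (∫ x, normF f x ∂μ) + ∫ x, normF g x ∂μ ∧
    (((∫ x, normF (fun x => f x + g x) x ∂μ) =
        (∫ x, normF f x ∂μ) + ∫ x, normF g x ∂μ ↔
      (argminF f ∩ argminF g).Nonempty) ∧
     ((∫ x, normF (fun x => f x + g x) x ∂μ) =
        (∫ x, normF f x ∂μ) + ∫ x, normF g x ∂μ ↔
      argminF (fun x => f x + g x) = argminF f ∩ argminF g)) := by
  rw [← Pi.add_def]
  have hdefect := integral_normF_add_defect μ hf.integrable_of_compactSpace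
    hg.integrable_of_compactSpace
  have hμ_pos : 0 < μ.real univ := ENNReal.toReal_pos hμ.ne' (measure_ne_top μ _)
  have hmin := minF_add_minF_le hf hg
  have heq_iff : ∫ x, normF (f + g) x ∂μ =
      (∫ x, normF f x ∂μ) + ∫ x, normF g x ∂μ ↔ minF (f + g) = minF f + minF g := by
    rw [← sub_eq_zero, ← neg_eq_zero, neg_sub, hdefect, mul_eq_zero, sub_eq_zero]
    exact or_iff_right hμ_pos.ne'
  refine ⟨?_, heq_iff.trans (minF_add_eq_iff_nonempty hf hg),
    heq_iff.trans (minF_add_eq_iff_argminF_add hf hg)⟩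
  rw [← sub_nonneg, hdefect]
  exact mul_nonneg hμ_pos.le (sub_nonneg.mpr hmin)
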